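/- Let s > 1/2 and let f, g be functions on the torus 𝕋 (or on [a,b] with periodic boundary conditions) lying in the Sobolev space H^s. Then the product fg lies in H^s and ‖fg‖_{H^s} ≤ C_s ‖f‖_{H^s} ‖g‖_{H^s} for a constant C_s depending only on s. -/

import Mathlib

open scoped Real

open scoped ENNReal NNReal
open MeasureTheory

lemma ofReal_norm_eq_coe_nnnorm {E : Type*} [SeminormedAddCommGroup E] (a : E) :
    ENNReal.ofReal ‖a‖ = ((‖a‖₊ : ℝ≥0) : ℝ≥0∞) :=
  ENNReal.ofReal_eq_coe_nnreal _

/-- H^s norm squared summand on the periodic interval of length `T`: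
weight `(1+μ_l²)^s` times `|f̂_l|²`, `μ_l = 2πl/T`. -/
noncomputable def sobolevSummand (T : ℝ) [hT : Fact (0 < T)] (s : ℝ)
    (f : AddCircle T → ℂ) (l : ℤ) : ℝ :=
  (1 + (2*π*l/T)^2) ^ s * ‖fourierCoeff f l‖^2


lemma fourier_norm_pt (T : ℝ) (n : ℤ) (x : AddCircle T) : ‖fourier n x‖ = 1 := by
  rw [fourier_apply, Circle.norm_coe]

lemma fourierConv (T : ℝ) [hT : Fact (0 < T)] (f g : AddCircle T → ℂ)
    (hf : Continuous f) (hg : Continuous g) (hsg : Summable (fourierCoeff g)) (l : ℤ) :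
    fourierCoeff (f * g) l = ∑' m : ℤ, fourierCoeff g m * fourierCoeff f (l - m) := by
  have hpt : ∀ x : AddCircle T, HasSum (fun m : ℤ => fourierCoeff g m • fourier m x) (g x) :=
    has_pointwise_sum_fourier_series_of_summable (f := ⟨g, hg⟩) hsg
  -- bound on f
  obtain ⟨M, hM⟩ : ∃ M : ℝ, ∀ x, ‖f x‖ ≤ M :=
    ⟨‖(⟨f, hf⟩ : C(AddCircle T, ℂ))‖, fun x => ContinuousMap.norm_coe_le_norm (⟨f, hf⟩ : C(AddCircle T, ℂ)) x⟩
  have key : fourierCoeff (f * g) l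
      = ∫ t : AddCircle T, ∑' m : ℤ, fourierCoeff g m *
          (fourier (-l) t * f t * fourier m t) ∂AddCircle.haarAddCircle := by
    rw [fourierCoeff]
    congr 1; funext t
    rw [smul_eq_mul, Pi.mul_apply]
    have h1 : HasSum (fun m : ℤ => fourierCoeff g m * (fourier (-l) t * f t * fourier m t))
        (fourier (-l) t * f t * g t) := by
      have := ((hpt t).mul_left (fourier (-l) t * f t))
      simpa [smul_eq_mul, mul_comm, mul_left_comm, mul_assoc] using this
    rw [h1.tsum_eq]; ring
  rw [key, integral_tsum]
  · congr 1; funext m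
    rw [integral_const_mul]
    congr 1
    rw [fourierCoeff]
    congr 1; funext t
    rw [smul_eq_mul]
    have : fourier (-l) t * fourier m t = fourier (-(l - m)) t := by
      rw [← fourier_add]; congr 1; ring
    rw [mul_right_comm, this]
  · intro m
    exact ((((fourier (-l)).continuous.mul hf).mul
      (fourier m).continuous).aestronglyMeasurable).const_mul _
  · rw [← lt_top_iff_ne_top]
    have bound : ∀ m : ℤ, (∫⁻ t, ‖fourierCoeff g m * (fourier (-l) t * f t * fourier m t)‖₊
        ∂AddCircle.haarAddCircle) ≤ ‖fourierCoeff g m‖₊ * ENNReal.ofReal M := by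
      intro m
      have : ∀ t : AddCircle T, (‖fourierCoeff g m * (fourier (-l) t * f t * fourier m t)‖₊ : ℝ≥0∞)
          ≤ ‖fourierCoeff g m‖₊ * ENNReal.ofReal M := by
        intro t
        have h2 : ‖fourierCoeff g m * (fourier (-l) t * f t * fourier m t)‖
            ≤ ‖fourierCoeff g m‖ * M := by
          rw [norm_mul, norm_mul, norm_mul, fourier_norm_pt, fourier_norm_pt]
          have h3 := hM t
          have h4 : (0:ℝ) ≤ ‖fourierCoeff g m‖ := norm_nonneg _
          nlinarith [norm_nonneg (f t)]
        calc (‖fourierCoeff g m * (fourier (-l) t * f t * fourier m t)‖₊ : ℝ≥0∞)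
            ≤ ENNReal.ofReal (‖fourierCoeff g m‖ * M) := by
              rw [← ofReal_norm_eq_coe_nnnorm]; exact ENNReal.ofReal_le_ofReal h2
          _ = ‖fourierCoeff g m‖₊ * ENNReal.ofReal M := by
              rw [ENNReal.ofReal_mul (norm_nonneg _), ofReal_norm_eq_coe_nnnorm]
      calc ∫⁻ t, ‖fourierCoeff g m * (fourier (-l) t * f t * fourier m t)‖₊ ∂AddCircle.haarAddCircle
          ≤ ∫⁻ _, ‖fourierCoeff g m‖₊ * ENNReal.ofReal M ∂AddCircle.haarAddCircle :=
            lintegral_mono this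
        _ = ‖fourierCoeff g m‖₊ * ENNReal.ofReal M := by
            rw [lintegral_const, measure_univ, mul_one]
    calc ∑' m : ℤ, (∫⁻ t, ‖fourierCoeff g m * (fourier (-l) t * f t * fourier m t)‖₊
          ∂AddCircle.haarAddCircle)
        ≤ ∑' m : ℤ, (‖fourierCoeff g m‖₊ : ℝ≥0∞) * ENNReal.ofReal M := ENNReal.tsum_le_tsum bound
      _ = (∑' m : ℤ, (‖fourierCoeff g m‖₊ : ℝ≥0∞)) * ENNReal.ofReal M := ENNReal.tsum_mul_right
      _ < ⊤ := by
          apply ENNReal.mul_lt_top _ ENNReal.ofReal_lt_top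
          rw [lt_top_iff_ne_top]
          exact ENNReal.tsum_coe_ne_top_iff_summable.2
            (NNReal.summable_coe.1 (by simpa using hsg.norm))

/-- Cauchy–Schwarz in `ℝ≥0∞`. -/
lemma ennCS (u v : ℤ → ℝ≥0∞) :
    (∑' m, u m * v m) ^ 2 ≤ (∑' m, (u m) ^ 2) * (∑' m, (v m) ^ 2) := by
  have hpq : Real.HolderConjugate 2 2 := Real.HolderConjugate.two_two
  have h := ENNReal.lintegral_mul_le_Lp_mul_Lq (μ := Measure.count (α := ℤ)) hpq
    (f := u) (g := v) (measurable_of_countable _).aemeasurable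
    (measurable_of_countable _).aemeasurable
  simp only [Pi.mul_apply, MeasureTheory.lintegral_count] at h
  have h2 : ∀ w : ℤ → ℝ≥0∞, (∑' m, w m ^ (2:ℝ)) = ∑' m, w m ^ 2 := by
    intro w; congr 1; funext m; rw [← ENNReal.rpow_natCast (w m) 2]; norm_num
  rw [h2, h2] at h
  calc (∑' m, u m * v m) ^ 2 ≤ ((∑' m, (u m)^2) ^ (1/(2:ℝ)) * (∑' m, (v m)^2) ^ (1/(2:ℝ))) ^ 2 :=
        pow_le_pow_left' h 2
    _ = (∑' m, (u m) ^ 2) * (∑' m, (v m) ^ 2) := by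
        rw [mul_pow, ← ENNReal.rpow_natCast (_ ^ (1/(2:ℝ))) 2, ← ENNReal.rpow_natCast (_ ^ (1/(2:ℝ))) 2,
          ← ENNReal.rpow_mul, ← ENNReal.rpow_mul]
        norm_num

lemma conv_comm (x y : ℤ → ℝ≥0∞) (l : ℤ) :
    ∑' m, x m * y (l - m) = ∑' m, y m * x (l - m) := by
  rw [← (Equiv.subLeft l).tsum_eq (fun m => y m * x (l - m))]
  congr 1; funext m
  simp [Equiv.subLeft, mul_comm, sub_sub_cancel]

/-- Young `ℓ² * ℓ¹ → ℓ²` (squared form), in `ℝ≥0∞`. -/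
lemma ennYoung (A y : ℤ → ℝ≥0∞) :
    ∑' l, (∑' m, A m * y (l - m)) ^ 2 ≤ (∑' m, y m) ^ 2 * ∑' m, (A m) ^ 2 := by
  have shift : ∀ m, ∑' l, y (l - m) = ∑' l, y l := fun m => (Equiv.subRight m).tsum_eq y
  have shift2 : ∀ l, ∑' m, y (l - m) = ∑' m, y m := fun l => (Equiv.subLeft l).tsum_eq y
  have pt : ∀ l, (∑' m, A m * y (l - m)) ^ 2
      ≤ (∑' m, y m) * ∑' m, (A m) ^ 2 * y (l - m) := by
    intro l
    have h := ennCS (fun m => A m * (y (l - m)) ^ (1/(2:ℝ))) (fun m => (y (l - m)) ^ (1/(2:ℝ)))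
    have e1 : ∀ m, A m * (y (l - m)) ^ (1/(2:ℝ)) * (y (l - m)) ^ (1/(2:ℝ)) = A m * y (l - m) := by
      intro m
      rw [mul_assoc, ← ENNReal.rpow_add_of_nonneg _ _ (by norm_num) (by norm_num)]
      norm_num
    have e2 : ∀ m, ((y (l - m)) ^ (1/(2:ℝ))) ^ 2 = y (l - m) := by
      intro m
      rw [← ENNReal.rpow_natCast (_ ^ (1/(2:ℝ))) 2, ← ENNReal.rpow_mul]; norm_num
    have e3 : ∀ m, (A m * (y (l - m)) ^ (1/(2:ℝ))) ^ 2 = (A m) ^ 2 * y (l - m) := by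
      intro m; rw [mul_pow, e2]
    simp only [e1, e2, e3] at h
    calc (∑' m, A m * y (l - m)) ^ 2
        ≤ (∑' m, (A m) ^ 2 * y (l - m)) * ∑' m, y (l - m) := h
      _ = (∑' m, y m) * ∑' m, (A m) ^ 2 * y (l - m) := by rw [shift2 l, mul_comm]
  calc ∑' l, (∑' m, A m * y (l - m)) ^ 2
      ≤ ∑' l, (∑' m, y m) * ∑' m, (A m) ^ 2 * y (l - m) := ENNReal.tsum_le_tsum pt
    _ = (∑' m, y m) * ∑' l, ∑' m, (A m) ^ 2 * y (l - m) := ENNReal.tsum_mul_left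
    _ = (∑' m, y m) * ∑' m, ∑' l, (A m) ^ 2 * y (l - m) := by rw [ENNReal.tsum_comm]
    _ = (∑' m, y m) * ∑' m, (A m) ^ 2 * ∑' l, y (l - m) := by
        congr 1; exact tsum_congr fun m => ENNReal.tsum_mul_left
    _ = (∑' m, y m) ^ 2 * ∑' m, (A m) ^ 2 := by
        simp only [shift]
        rw [ENNReal.tsum_mul_right, sq]
        ring

noncomputable def Vw (T s : ℝ) (l : ℤ) : ℝ := (1 + (2*π*l/T)^2) ^ (s/2)

lemma Vw_base_pos (T : ℝ) (l : ℤ) : (0:ℝ) < 1 + (2*π*l/T)^2 := by positivity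

lemma one_le_Vw (T s : ℝ) (hs : 0 ≤ s) (l : ℤ) : 1 ≤ Vw T s l :=
  Real.one_le_rpow (by nlinarith [sq_nonneg (2*π*l/T)]) (by positivity)

lemma Vw_pos (T s : ℝ) (l : ℤ) : 0 < Vw T s l := Real.rpow_pos_of_pos (Vw_base_pos T l) _

lemma Vw_nonneg (T s : ℝ) (l : ℤ) : 0 ≤ Vw T s l := Real.rpow_nonneg (Vw_base_pos T l).le _

lemma Vw_sq (T s : ℝ) (l : ℤ) : (Vw T s l) ^ 2 = (1 + (2*π*l/T)^2) ^ s := by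
  rw [Vw, ← Real.rpow_natCast (_ ^ (s/2)) 2, ← Real.rpow_mul (Vw_base_pos T l).le]
  norm_num

lemma weight_split (T s : ℝ) (hT : 0 < T) (hs : 0 ≤ s) (l m : ℤ) :
    Vw T s l ≤ 2 ^ s * (Vw T s m + Vw T s (l - m)) := by
  set x : ℝ := 2*π*m/T with hx
  set y : ℝ := 2*π*(l-m)/T with hy
  have hxy : 2*π*l/T = x + y := by
    rw [hx, hy]; push_cast; field_simp; ring
  have key : ∀ z : ℝ, 1 + (2*π*l/T)^2 ≤ 4 * (1 + z^2) →
      Vw T s l ≤ 2 ^ s * (1 + z^2) ^ (s/2) := by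
    intro z hz
    have h1 : Vw T s l ≤ (4 * (1 + z^2)) ^ (s/2) :=
      Real.rpow_le_rpow (Vw_base_pos T l).le hz (by positivity)
    have h2 : ((4:ℝ) * (1 + z^2)) ^ (s/2) = 2 ^ s * (1 + z^2) ^ (s/2) := by
      rw [Real.mul_rpow (by norm_num) (by positivity)]
      congr 1
      rw [show (4:ℝ) = 2 ^ (2:ℝ) by norm_num, ← Real.rpow_mul (by norm_num)]
      congr 1; ring
    linarith [h1, h2.le.trans (le_of_eq rfl)]
  rcases le_total (x^2) (y^2) with hc | hc
  · have h := key y (by rw [hxy]; nlinarith [sq_nonneg (x - y), sq_nonneg (x+y)])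
    have : (1 + y^2) ^ (s/2) = Vw T s (l - m) := by rw [Vw, hy]; push_cast; ring_nf
    rw [this] at h
    nlinarith [Vw_nonneg T s m, Real.rpow_nonneg (le_of_lt one_pos : (0:ℝ) ≤ 1) s,
      Real.rpow_nonneg (by norm_num : (0:ℝ) ≤ 2) s]
  · have h := key x (by rw [hxy]; nlinarith [sq_nonneg (x - y), sq_nonneg (x+y)])
    have : (1 + x^2) ^ (s/2) = Vw T s m := by rw [Vw, hx]
    rw [this] at h
    nlinarith [Vw_nonneg T s (l - m), Real.rpow_nonneg (by norm_num : (0:ℝ) ≤ 2) s]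

lemma inv_weight_summable (T s : ℝ) (hT : 0 < T) (hs : 1/2 < s) :
    Summable (fun l : ℤ => (1 + (2*π*l/T)^2) ^ (-s)) := by
  have h2s : 1 < 2*s := by linarith
  have hbase : Summable (fun l : ℤ => 1 / |(l:ℝ)|^(2*s)) := by
    have := (Real.summable_one_div_int_add_rpow 0 (2*s)).2 h2s
    simpa using this
  set K : ℝ := ((2*π/T)^2) ^ (-s) with hK
  have hKpos : 0 < K := by positivity
  have hsum : Summable (fun l : ℤ => (if l = 0 then (1:ℝ) else 0) + K * (1 / |(l:ℝ)|^(2*s))) := by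
    apply Summable.add
    · exact summable_of_ne_finset_zero (s := {0}) (fun l hl => by
        simp only [Finset.mem_singleton] at hl; simp [hl])
    · exact hbase.mul_left K
  refine Summable.of_nonneg_of_le (fun l => by positivity) ?_ hsum
  intro l
  · 
    rcases eq_or_ne l 0 with rfl | hl
    · simp only [if_pos rfl]
      have : ((1:ℝ) + (2*π*(0:ℤ)/T)^2) ^ (-s) = 1 := by norm_num
      rw [this]
      have : |((0:ℤ):ℝ)|^(2*s) = 0 := by
        rw [show |((0:ℤ):ℝ)| = 0 by norm_num]
        exact Real.zero_rpow (by linarith)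
      rw [this]
      simp
    · simp only [if_neg hl]
      have hl1 : (1:ℝ) ≤ |(l:ℝ)| := by
        rw [← Int.cast_abs]; exact_mod_cast Int.one_le_abs (by simpa using hl)
      have hlpos : (0:ℝ) < |(l:ℝ)| := by linarith
      have hbig : (2*π/T)^2 * |(l:ℝ)|^(2:ℝ) ≤ 1 + (2*π*l/T)^2 := by
        have : (2*π/T)^2 * |(l:ℝ)|^(2:ℝ) = (2*π*l/T)^2 := by
          rw [show |(l:ℝ)|^(2:ℝ) = |(l:ℝ)|^(2:ℕ) by rw [show ((2:ℝ)) = ((2:ℕ):ℝ) by norm_num, Real.rpow_natCast]]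
          rw [sq_abs]; field_simp
        linarith [this.le, this.ge]
      have hmono : ((2*π/T)^2 * |(l:ℝ)|^(2:ℝ)) ^ s ≤ (1 + (2*π*l/T)^2) ^ s :=
        Real.rpow_le_rpow (by positivity) hbig (by linarith)
      have hexp : ((2*π/T)^2 * |(l:ℝ)|^(2:ℝ)) ^ s = ((2*π/T)^2)^s * |(l:ℝ)|^(2*s) := by
        rw [Real.mul_rpow (by positivity) (by positivity), ← Real.rpow_mul hlpos.le]
      have hpos1 : (0:ℝ) < ((2*π/T)^2)^s * |(l:ℝ)|^(2*s) := by positivity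
      have hineq : (1 + (2*π*l/T)^2) ^ (-s) ≤ (((2*π/T)^2)^s * |(l:ℝ)|^(2*s))⁻¹ := by
        rw [Real.rpow_neg (Vw_base_pos T l).le]
        exact inv_anti₀ hpos1 (by rw [← hexp]; exact hmono)
      calc (1 + (2*π*l/T)^2) ^ (-s) ≤ (((2*π/T)^2)^s * |(l:ℝ)|^(2*s))⁻¹ := hineq
        _ = K * (1 / |(l:ℝ)|^(2*s)) := by
            rw [hK, Real.rpow_neg (by positivity), mul_inv]
            ring
        _ = 0 + K * (1 / |(l:ℝ)|^(2*s)) := by ring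

noncomputable def KK (T s : ℝ) : ℝ≥0∞ :=
  ∑' l : ℤ, ENNReal.ofReal ((1 + (2*π*(l:ℤ)/T)^2) ^ (-s))

lemma KK_ne_top (T s : ℝ) (hT : 0 < T) (hs : 1/2 < s) : KK T s ≠ ⊤ := by
  rw [KK, ← ENNReal.ofReal_tsum_of_nonneg (fun l => Real.rpow_nonneg (Vw_base_pos T l).le _)
    (inv_weight_summable T s hT hs)]
  exact ENNReal.ofReal_ne_top

lemma sob_nonneg (T : ℝ) [hT : Fact (0 < T)] (s : ℝ) (f : AddCircle T → ℂ) (l : ℤ) :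
    0 ≤ sobolevSummand T s f l :=
  mul_nonneg (Real.rpow_nonneg (Vw_base_pos T l).le _) (sq_nonneg _)

lemma sob_ofReal (T : ℝ) [hT : Fact (0 < T)] (s : ℝ) (f : AddCircle T → ℂ) (l : ℤ) :
    ENNReal.ofReal (sobolevSummand T s f l)
      = (ENNReal.ofReal (Vw T s l) * (‖fourierCoeff f l‖₊ : ℝ≥0∞)) ^ 2 := by
  rw [sobolevSummand, ← Vw_sq, ← mul_pow, ENNReal.ofReal_pow
    (mul_nonneg (Vw_nonneg T s l) (norm_nonneg _)), ENNReal.ofReal_mul (Vw_nonneg T s l),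
    ofReal_norm_eq_coe_nnnorm]

/-- `ℓ¹` bound from the weighted `ℓ²` norm, `s > 1/2`. -/
lemma ell1_bound (T : ℝ) [hT : Fact (0 < T)] (s : ℝ) (f : AddCircle T → ℂ) :
    (∑' l : ℤ, (‖fourierCoeff f l‖₊ : ℝ≥0∞)) ^ 2
      ≤ KK T s * ∑' l : ℤ, ENNReal.ofReal (sobolevSummand T s f l) := by
  have h := ennCS (fun l => ENNReal.ofReal ((Vw T s l)⁻¹))
    (fun l => ENNReal.ofReal (Vw T s l) * (‖fourierCoeff f l‖₊ : ℝ≥0∞))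
  have e1 : ∀ l : ℤ, ENNReal.ofReal ((Vw T s l)⁻¹) *
      (ENNReal.ofReal (Vw T s l) * (‖fourierCoeff f l‖₊ : ℝ≥0∞))
      = (‖fourierCoeff f l‖₊ : ℝ≥0∞) := by
    intro l
    rw [← mul_assoc, ← ENNReal.ofReal_mul (inv_nonneg.2 (Vw_nonneg T s l)),
      inv_mul_cancel₀ (Vw_pos T s l).ne']
    simp
  have e2 : ∀ l : ℤ, (ENNReal.ofReal ((Vw T s l)⁻¹)) ^ 2
      = ENNReal.ofReal ((1 + (2*π*(l:ℤ)/T)^2) ^ (-s)) := by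
    intro l
    rw [← ENNReal.ofReal_pow (inv_nonneg.2 (Vw_nonneg T s l)), inv_pow, Vw_sq,
      ← Real.rpow_neg (Vw_base_pos T l).le]
  simp only [e1, e2] at h
  calc (∑' l : ℤ, (‖fourierCoeff f l‖₊ : ℝ≥0∞)) ^ 2
      ≤ (∑' l : ℤ, ENNReal.ofReal ((1 + (2*π*(l:ℤ)/T)^2) ^ (-s))) *
        ∑' l : ℤ, (ENNReal.ofReal (Vw T s l) * (‖fourierCoeff f l‖₊ : ℝ≥0∞)) ^ 2 := h
    _ = KK T s * ∑' l : ℤ, ENNReal.ofReal (sobolevSummand T s f l) := by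
        rw [KK]; congr 1; exact (tsum_congr fun l => (sob_ofReal T s f l)).symm

lemma enn_sq_add (u v : ℝ≥0∞) : (u + v) ^ 2 ≤ 4 * (u ^ 2 + v ^ 2) := by
  rcases le_total u v with h | h
  · calc (u + v)^2 ≤ (v + v)^2 := by gcongr
      _ = 4 * v^2 := by ring
      _ ≤ 4 * (u^2 + v^2) := by gcongr; exact le_add_self
  · calc (u + v)^2 ≤ (u + u)^2 := by gcongr
      _ = 4 * u^2 := by ring
      _ ≤ 4 * (u^2 + v^2) := by gcongr; exact le_self_add

lemma main_est (T : ℝ) [hT : Fact (0 < T)] (s : ℝ) (hs : 1/2 < s)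
    (f g : AddCircle T → ℂ) (hf : Continuous f) (hg : Continuous g)
    (hsf : Summable (sobolevSummand T s f)) (hsg : Summable (sobolevSummand T s g)) :
    ∑' l : ℤ, ENNReal.ofReal (sobolevSummand T s (f * g) l)
      ≤ (ENNReal.ofReal (2 ^ s)) ^ 2 * 8 * KK T s *
        (∑' l : ℤ, ENNReal.ofReal (sobolevSummand T s f l)) *
        (∑' l : ℤ, ENNReal.ofReal (sobolevSummand T s g l)) := by
  have hs0 : (0:ℝ) ≤ s := by linarith
  set a : ℤ → ℝ≥0∞ := fun l => (‖fourierCoeff f l‖₊ : ℝ≥0∞) with ha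
  set b : ℤ → ℝ≥0∞ := fun l => (‖fourierCoeff g l‖₊ : ℝ≥0∞) with hb
  set V' : ℤ → ℝ≥0∞ := fun l => ENNReal.ofReal (Vw T s l) with hV'
  set Sf : ℝ≥0∞ := ∑' l : ℤ, ENNReal.ofReal (sobolevSummand T s f l) with hSf
  set Sg : ℝ≥0∞ := ∑' l : ℤ, ENNReal.ofReal (sobolevSummand T s g l) with hSg
  have hSf_ne : Sf ≠ ⊤ := by
    rw [hSf, ← ENNReal.ofReal_tsum_of_nonneg (sob_nonneg T s f) hsf]
    exact ENNReal.ofReal_ne_top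
  have hSg_ne : Sg ≠ ⊤ := by
    rw [hSg, ← ENNReal.ofReal_tsum_of_nonneg (sob_nonneg T s g) hsg]
    exact ENNReal.ofReal_ne_top
  have hSfsum : Sf = ∑' l : ℤ, (V' l * a l) ^ 2 := tsum_congr fun l => sob_ofReal T s f l
  have hSgsum : Sg = ∑' l : ℤ, (V' l * b l) ^ 2 := tsum_congr fun l => sob_ofReal T s g l
  -- ℓ¹ bounds
  have hell1f : (∑' l, a l) ^ 2 ≤ KK T s * Sf := ell1_bound T s f
  have hell1g : (∑' l, b l) ^ 2 ≤ KK T s * Sg := ell1_bound T s g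
  have hKne := KK_ne_top T s hT.out hs
  have hane : (∑' l, a l) ≠ ⊤ := by
    intro hcon
    have : ((⊤:ℝ≥0∞))^2 ≤ KK T s * Sf := hcon ▸ hell1f
    rw [ENNReal.top_pow (by norm_num)] at this
    exact (ENNReal.mul_lt_top (lt_top_iff_ne_top.2 hKne)
      (lt_top_iff_ne_top.2 hSf_ne)).ne (top_le_iff.1 this)
  have hbne : (∑' l, b l) ≠ ⊤ := by
    intro hcon
    have : ((⊤:ℝ≥0∞))^2 ≤ KK T s * Sg := hcon ▸ hell1g
    rw [ENNReal.top_pow (by norm_num)] at this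
    exact (ENNReal.mul_lt_top (lt_top_iff_ne_top.2 hKne)
      (lt_top_iff_ne_top.2 hSg_ne)).ne (top_le_iff.1 this)
  have hsumnf : Summable fun l => ‖fourierCoeff f l‖ := by
    have := ENNReal.tsum_coe_ne_top_iff_summable.1 hane
    exact NNReal.summable_coe.2 this
  have hsumng : Summable fun l => ‖fourierCoeff g l‖ := by
    have := ENNReal.tsum_coe_ne_top_iff_summable.1 hbne
    exact NNReal.summable_coe.2 this
  -- convolution bound
  have hc : ∀ l : ℤ, (‖fourierCoeff (f * g) l‖₊ : ℝ≥0∞) ≤ ∑' m, b m * a (l - m) := by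
    intro l
    rw [fourierConv T f g hf hg (Summable.of_norm hsumng) l]
    have hz : Summable fun m : ℤ => ‖fourierCoeff g m * fourierCoeff f (l - m)‖ := by
      refine Summable.of_nonneg_of_le (fun m => norm_nonneg _)
        (fun m => ?_) (hsumng.mul_right (∑' m, ‖fourierCoeff f m‖))
      rw [norm_mul]
      exact mul_le_mul_of_nonneg_left (Summable.le_tsum hsumnf (l - m) fun _ _ => norm_nonneg _)
        (norm_nonneg _)
    calc (‖∑' m : ℤ, fourierCoeff g m * fourierCoeff f (l - m)‖₊ : ℝ≥0∞)
        = ENNReal.ofReal ‖∑' m : ℤ, fourierCoeff g m * fourierCoeff f (l - m)‖ :=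
          (ofReal_norm_eq_coe_nnnorm _).symm
      _ ≤ ENNReal.ofReal (∑' m : ℤ, ‖fourierCoeff g m * fourierCoeff f (l - m)‖) :=
          ENNReal.ofReal_le_ofReal (norm_tsum_le_tsum_norm hz)
      _ = ∑' m : ℤ, ENNReal.ofReal ‖fourierCoeff g m * fourierCoeff f (l - m)‖ :=
          ENNReal.ofReal_tsum_of_nonneg (fun m => norm_nonneg _) hz
      _ = ∑' m : ℤ, b m * a (l - m) := by
          refine tsum_congr fun m => ?_
          rw [norm_mul, ENNReal.ofReal_mul (norm_nonneg _), ofReal_norm_eq_coe_nnnorm,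
            ofReal_norm_eq_coe_nnnorm]
  -- weight split
  set c2 : ℝ≥0∞ := ENNReal.ofReal (2 ^ s) with hc2
  have hsplit : ∀ l m : ℤ, V' l ≤ c2 * (V' m + V' (l - m)) := by
    intro l m
    rw [hV', hc2]
    calc ENNReal.ofReal (Vw T s l)
        ≤ ENNReal.ofReal (2 ^ s * (Vw T s m + Vw T s (l - m))) :=
          ENNReal.ofReal_le_ofReal (weight_split T s hT.out hs0 l m)
      _ = ENNReal.ofReal (2 ^ s) * (ENNReal.ofReal (Vw T s m) + ENNReal.ofReal (Vw T s (l - m))) := by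
          rw [ENNReal.ofReal_mul (by positivity),
            ENNReal.ofReal_add (Vw_nonneg T s m) (Vw_nonneg T s (l - m))]
  set P : ℤ → ℝ≥0∞ := fun l => ∑' m, (V' m * b m) * a (l - m) with hP
  set Q : ℤ → ℝ≥0∞ := fun l => ∑' m, (V' m * a m) * b (l - m) with hQ
  have hVc : ∀ l : ℤ, V' l * (‖fourierCoeff (f * g) l‖₊ : ℝ≥0∞) ≤ c2 * (P l + Q l) := by
    intro l
    calc V' l * (‖fourierCoeff (f * g) l‖₊ : ℝ≥0∞)
        ≤ V' l * ∑' m, b m * a (l - m) := mul_le_mul_right (hc l) _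
      _ = ∑' m, V' l * (b m * a (l - m)) := ENNReal.tsum_mul_left.symm
      _ ≤ ∑' m, (c2 * (V' m + V' (l - m))) * (b m * a (l - m)) :=
          ENNReal.tsum_le_tsum fun m => mul_le_mul_left (hsplit l m) _
      _ = ∑' m, c2 * ((V' m * b m) * a (l - m) + b m * (V' (l - m) * a (l - m))) := by
          refine tsum_congr fun m => ?_; ring
      _ = c2 * ((∑' m, (V' m * b m) * a (l - m)) + ∑' m, b m * (V' (l - m) * a (l - m))) := by
          rw [ENNReal.tsum_mul_left, ENNReal.tsum_add]
      _ = c2 * (P l + Q l) := by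
          have hQc : (∑' m, b m * (V' (l - m) * a (l - m))) = Q l :=
            conv_comm b (fun k => V' k * a k) l
          rw [hQc]
  have main : ∀ l : ℤ, ENNReal.ofReal (sobolevSummand T s (f * g) l)
      ≤ c2 ^ 2 * 4 * ((P l) ^ 2 + (Q l) ^ 2) := by
    intro l
    rw [sob_ofReal]
    calc (V' l * (‖fourierCoeff (f * g) l‖₊ : ℝ≥0∞)) ^ 2
        ≤ (c2 * (P l + Q l)) ^ 2 := pow_le_pow_left' (hVc l) 2
      _ = c2 ^ 2 * (P l + Q l) ^ 2 := by ring
      _ ≤ c2 ^ 2 * (4 * ((P l) ^ 2 + (Q l) ^ 2)) := mul_le_mul_right (enn_sq_add _ _) _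
      _ = c2 ^ 2 * 4 * ((P l) ^ 2 + (Q l) ^ 2) := by ring
  have hPsum : ∑' l, (P l) ^ 2 ≤ (∑' m, a m) ^ 2 * Sg := by
    rw [hSgsum]
    exact ennYoung (fun m => V' m * b m) a
  have hQsum : ∑' l, (Q l) ^ 2 ≤ (∑' m, b m) ^ 2 * Sf := by
    rw [hSfsum]
    exact ennYoung (fun m => V' m * a m) b
  calc ∑' l : ℤ, ENNReal.ofReal (sobolevSummand T s (f * g) l)
      ≤ ∑' l : ℤ, c2 ^ 2 * 4 * ((P l) ^ 2 + (Q l) ^ 2) := ENNReal.tsum_le_tsum main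
    _ = c2 ^ 2 * 4 * ((∑' l, (P l) ^ 2) + ∑' l, (Q l) ^ 2) := by
        rw [ENNReal.tsum_mul_left, ENNReal.tsum_add]
    _ ≤ c2 ^ 2 * 4 * ((∑' m, a m) ^ 2 * Sg + (∑' m, b m) ^ 2 * Sf) := by
        gcongr
    _ ≤ c2 ^ 2 * 4 * ((KK T s * Sf) * Sg + (KK T s * Sg) * Sf) := by
        gcongr
    _ = c2 ^ 2 * 8 * KK T s * Sf * Sg := by ring

/-- Algebra property of `H^s`, `s > 1/2`: `‖fg‖_{H^s} ≤ C_s ‖f‖_{H^s} ‖g‖_{H^s}`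
with `C_s` depending only on `s` (and the period). -/
theorem stmt10 (T : ℝ) [hT : Fact (0 < T)] (s : ℝ) (hs : 1/2 < s) :
    ∃ C > 0, ∀ f g : AddCircle T → ℂ, Continuous f → Continuous g →
      Summable (sobolevSummand T s f) → Summable (sobolevSummand T s g) →
      Summable (sobolevSummand T s (f * g)) ∧
      Real.sqrt (∑' l : ℤ, sobolevSummand T s (f * g) l)
        ≤ C * Real.sqrt (∑' l : ℤ, sobolevSummand T s f l)
            * Real.sqrt (∑' l : ℤ, sobolevSummand T s g l) := by
  set Cen : ℝ≥0∞ := (ENNReal.ofReal (2 ^ s)) ^ 2 * 8 * KK T s with hCen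
  have hCen_ne : Cen ≠ ⊤ := by
    rw [hCen]
    exact ENNReal.mul_ne_top (ENNReal.mul_ne_top (ENNReal.pow_ne_top ENNReal.ofReal_ne_top)
      (by norm_num)) (KK_ne_top T s hT.out hs)
  set C : ℝ := max 1 (Real.sqrt Cen.toReal) with hC
  have hC0 : (0:ℝ) < C := lt_of_lt_of_le one_pos (le_max_left _ _)
  refine ⟨C, hC0, ?_⟩
  intro f g hf hg hsf hsg
  have hest := main_est T s hs f g hf hg hsf hsg
  have hSfE : (∑' l : ℤ, ENNReal.ofReal (sobolevSummand T s f l))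
      = ENNReal.ofReal (∑' l : ℤ, sobolevSummand T s f l) :=
    (ENNReal.ofReal_tsum_of_nonneg (sob_nonneg T s f) hsf).symm
  have hSgE : (∑' l : ℤ, ENNReal.ofReal (sobolevSummand T s g l))
      = ENNReal.ofReal (∑' l : ℤ, sobolevSummand T s g l) :=
    (ENNReal.ofReal_tsum_of_nonneg (sob_nonneg T s g) hsg).symm
  have hRHS_ne : Cen * ENNReal.ofReal (∑' l : ℤ, sobolevSummand T s f l)
      * ENNReal.ofReal (∑' l : ℤ, sobolevSummand T s g l) ≠ ⊤ :=
    ENNReal.mul_ne_top (ENNReal.mul_ne_top hCen_ne ENNReal.ofReal_ne_top) ENNReal.ofReal_ne_top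
  have hest' : (∑' l : ℤ, ENNReal.ofReal (sobolevSummand T s (f * g) l))
      ≤ Cen * ENNReal.ofReal (∑' l : ℤ, sobolevSummand T s f l)
        * ENNReal.ofReal (∑' l : ℤ, sobolevSummand T s g l) := by
    rw [← hSfE, ← hSgE]; exact hest
  have hne : (∑' l : ℤ, ENNReal.ofReal (sobolevSummand T s (f * g) l)) ≠ ⊤ :=
    ne_top_of_le_ne_top hRHS_ne hest'
  have hsumfg : Summable (sobolevSummand T s (f * g)) := by
    have h := ENNReal.summable_toReal hne
    exact h.congr fun l => ENNReal.toReal_ofReal (sob_nonneg T s (f * g) l)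
  refine ⟨hsumfg, ?_⟩
  have key : (∑' l : ℤ, sobolevSummand T s (f * g) l)
      ≤ Cen.toReal * (∑' l : ℤ, sobolevSummand T s f l) * (∑' l : ℤ, sobolevSummand T s g l) := by
    have h1 : ENNReal.ofReal (∑' l : ℤ, sobolevSummand T s (f * g) l)
        ≤ Cen * ENNReal.ofReal (∑' l : ℤ, sobolevSummand T s f l)
          * ENNReal.ofReal (∑' l : ℤ, sobolevSummand T s g l) := by
      rw [ENNReal.ofReal_tsum_of_nonneg (sob_nonneg T s (f * g)) hsumfg]
      exact hest'
    have h2 := (ENNReal.toReal_le_toReal ENNReal.ofReal_ne_top hRHS_ne).2 h1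
    rwa [ENNReal.toReal_ofReal (tsum_nonneg (sob_nonneg T s (f * g))), ENNReal.toReal_mul,
      ENNReal.toReal_mul, ENNReal.toReal_ofReal (tsum_nonneg (sob_nonneg T s f)),
      ENNReal.toReal_ofReal (tsum_nonneg (sob_nonneg T s g))] at h2
  have hCsq : Cen.toReal ≤ C ^ 2 := by
    have h3 : Real.sqrt Cen.toReal ≤ C := le_max_right _ _
    calc Cen.toReal = (Real.sqrt Cen.toReal) ^ 2 := (Real.sq_sqrt ENNReal.toReal_nonneg).symm
      _ ≤ C ^ 2 := pow_le_pow_left₀ (Real.sqrt_nonneg _) h3 2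
  have hfnn : (0:ℝ) ≤ ∑' l : ℤ, sobolevSummand T s f l := tsum_nonneg (sob_nonneg T s f)
  have hgnn : (0:ℝ) ≤ ∑' l : ℤ, sobolevSummand T s g l := tsum_nonneg (sob_nonneg T s g)
  calc Real.sqrt (∑' l : ℤ, sobolevSummand T s (f * g) l)
      ≤ Real.sqrt (C ^ 2 * (∑' l : ℤ, sobolevSummand T s f l)
          * (∑' l : ℤ, sobolevSummand T s g l)) := by
        apply Real.sqrt_le_sqrt
        calc (∑' l : ℤ, sobolevSummand T s (f * g) l)
            ≤ Cen.toReal * (∑' l : ℤ, sobolevSummand T s f l)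
              * (∑' l : ℤ, sobolevSummand T s g l) := key
          _ ≤ C ^ 2 * (∑' l : ℤ, sobolevSummand T s f l)
              * (∑' l : ℤ, sobolevSummand T s g l) := by
              apply mul_le_mul_of_nonneg_right _ hgnn
              exact mul_le_mul_of_nonneg_right hCsq hfnn
    _ = C * Real.sqrt (∑' l : ℤ, sobolevSummand T s f l)
          * Real.sqrt (∑' l : ℤ, sobolevSummand T s g l) := by
        rw [Real.sqrt_mul (by positivity), Real.sqrt_mul (by positivity),
          Real.sqrt_sq hC0.le]
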